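/- arXiv:1409.4553 — 7 statements merged into one kernel-verified Lean document; each statement's English description precedes it below -/
import Mathlib

section
/- Let α > 1 and k = 3. The polynomial equation u^4 - α u^3 + (α^2 + 1) u^2 - α u + 1 = 0 has no real solution u > 0 with u ≠ 1. -/
theorem stmt_0 (α u : ℝ) (hα : α > 1) (hu : u > 0) (hu1 : u ≠ 1) :
    u^4 - α*u^3 + (α^2 + 1)*u^2 - α*u + 1 ≠ 0 := by
  have hαpos : (0:ℝ) < α := by linarith
  have h1 : α * u * (u - 1)^2 ≥ 0 := mul_nonneg (by positivity) (sq_nonneg _)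
  have h2 : (2*α - 1) * u^2 > 0 := mul_pos (by linarith) (by positivity)
  have h : u^4 - α*u^3 + (α^2 + 1)*u^2 - α*u + 1 > 0 := by
    nlinarith [sq_nonneg (u^2 - α*u + 1), h1, h2]
  linarith
end

section
/- The function ψ(α) = 2α^3 - 27α^2 - 9α + 2(α^2 + 6)^{3/2} is strictly increasing on the interval (α', ∞), where α' = (48 + √264)/12, and ψ(5) < 0; hence there exists a unique α_cr > 5 with ψ(α_cr) = 0. -/
/-!
For `α ≥ 5` we have `√(α² + 6) > α`, so
`ψ'(α) = 6α² - 54α - 9 + 6α√(α² + 6) > 12α² - 54α - 9 > 0`, and `ψ` is strictly increasing on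
`[5, ∞)`, which contains `(α', ∞)` since `√264 > 12`. Since `ψ(5) = 62√31 - 470 < 0` and
`ψ(14) > 0`, the intermediate value theorem gives a zero in `(5, 14)`, unique by monotonicity.
-/

open Set Real

theorem StrictMonoOn.existsUnique_gt_eq {α δ : Type*} [ConditionallyCompleteLinearOrder α]
    [TopologicalSpace α] [OrderTopology α] [DenselyOrdered α] [LinearOrder δ]
    [TopologicalSpace δ] [OrderClosedTopology δ] {f : α → δ} {a b : α} {y : δ}
    (hmono : StrictMonoOn f (Ici a)) (hab : a ≤ b) (hcont : ContinuousOn f (Icc a b))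
    (ha : f a < y) (hb : y < f b) : ∃! c, a < c ∧ f c = y := by
  obtain ⟨c, hc, hfc⟩ := intermediate_value_Ioo hab hcont ⟨ha, hb⟩
  refine ⟨c, ⟨hc.1, hfc⟩, fun d ⟨hd, hfd⟩ => ?_⟩
  exact hmono.injOn hd.le hc.1.le (hfd.trans hfc.symm)

noncomputable def psi (α : ℝ) : ℝ := 2*α^3 - 27*α^2 - 9*α + 2*(α^2+6)^((3:ℝ)/2)

theorem hasDerivAt_psi (x : ℝ) :
    HasDerivAt psi (6*x^2 - 54*x - 9 + 6*x*√(x^2+6)) x := by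
  have hpoly : HasDerivAt (fun α : ℝ => 2*α^3 - 27*α^2 - 9*α) (6*x^2 - 54*x - 9) x := by
    refine ((((hasDerivAt_pow 3 x).const_mul 2).sub ((hasDerivAt_pow 2 x).const_mul 27)).sub
      ((hasDerivAt_id x).const_mul 9)).congr_deriv ?_
    push_cast
    ring
  have hpow : HasDerivAt (fun α : ℝ => (α^2+6)^((3:ℝ)/2))
      ((3/2) * (x^2+6)^((3:ℝ)/2 - 1) * (2*x)) x :=
    ((hasDerivAt_pow 2 x).add_const 6).rpow_const (Or.inl (by positivity)) |>.congr_deriv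
      (by push_cast; ring)
  refine (hpoly.add (hpow.const_mul 2)).congr_deriv ?_
  rw [show (3:ℝ)/2 - 1 = 1/2 by norm_num, ← sqrt_eq_rpow]
  ring

theorem continuous_psi : Continuous psi :=
  continuous_iff_continuousAt.2 fun x => (hasDerivAt_psi x).continuousAt

theorem strictMonoOn_psi : StrictMonoOn psi (Ici 5) := by
  refine strictMonoOn_of_deriv_pos (convex_Ici 5) continuous_psi.continuousOn fun x hx => ?_
  rw [interior_Ici] at hx
  have hx5 : (5:ℝ) < x := hx
  have hsqrt : x < √(x^2+6) := lt_sqrt_of_sq_lt (by linarith)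
  rw [(hasDerivAt_psi x).deriv]
  nlinarith

theorem rpow_three_halves {x : ℝ} (hx : 0 ≤ x) : x ^ ((3:ℝ)/2) = x * √x := by
  rw [sqrt_eq_rpow, ← rpow_one_add' hx (by norm_num)]
  norm_num

theorem psi_five_neg : psi 5 < 0 := by
  have hsqrt : √31 < 6 := (sqrt_lt' (by norm_num)).2 (by norm_num)
  rw [psi, show (5:ℝ)^2 + 6 = 31 by norm_num, rpow_three_halves (by norm_num)]
  linarith

theorem psi_fourteen_pos : 0 < psi 14 := by
  have : (0:ℝ) < ((14:ℝ)^2+6) ^ ((3:ℝ)/2) := rpow_pos_of_pos (by norm_num) _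
  rw [psi]
  linarith

theorem five_lt_alphaPrime : (5:ℝ) < (48 + √264)/12 := by
  have : (12:ℝ) < √264 := lt_sqrt_of_sq_lt (by norm_num)
  linarith

theorem stmt_7 :
    StrictMonoOn (fun α : ℝ => 2*α^3 - 27*α^2 - 9*α + 2*(α^2+6)^((3:ℝ)/2))
      (Set.Ioi ((48 + Real.sqrt 264)/12)) ∧
    (2*(5:ℝ)^3 - 27*5^2 - 9*5 + 2*((5:ℝ)^2+6)^((3:ℝ)/2) < 0) ∧
    (∃! αcr : ℝ, αcr > 5 ∧ 2*αcr^3 - 27*αcr^2 - 9*αcr + 2*(αcr^2+6)^((3:ℝ)/2) = 0) :=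
  ⟨strictMonoOn_psi.mono fun _ hx => (five_lt_alphaPrime.trans hx).le, psi_five_neg,
    strictMonoOn_psi.existsUnique_gt_eq (by norm_num) continuous_psi.continuousOn psi_five_neg
      psi_fourteen_pos⟩
end

section
/- There exists a unique α_cr > 2.5 such that for α > α_cr the cubic ξ^3 - α ξ^2 - 2ξ + α^2 + α has exactly two roots in (2, ∞), for α = α_cr it has exactly one root in (2, ∞), and for 1 < α < α_cr it has no roots in (2, ∞). -/
/-!
Write `f ξ = ξ³ - αξ² - 2ξ + α² + α`. Since `f' ξ = 3 (ξ - x₊)(ξ - x₋)` with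
`x± = (α ± √(α² + 6)) / 3` and `x₋ < 0`, on `[2, ∞)` the cubic falls to its local minimum `x₊`
and then rises, while `f 2 = α² - 3α + 4 > 0`. So it has two, one or no roots in `(2, ∞)`
according as `f x₊` is negative, zero or positive (for `α ≤ 5/2` we have `x₊ ≤ 2` and there are
none). The discriminant of a monic cubic is `Δ = -27 f(x₊) f(x₋)`, and the local maximum
`f x₋` is positive for `α > 0`, so the sign of `f x₊` is opposite to that of
`Δ(α) = 4α⁵ - 23α⁴ - 18α³ + 13α² + 32`. This quintic is negative on `(5/2, 6]` and increasing
on `[6, ∞)`, so it changes sign exactly once on `(5/2, ∞)`, at `α_cr ∈ [6, 7]`.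
-/

open Set

section Valley

variable {f : ℝ → ℝ} {a m : ℝ}

lemma apply_lt_apply_of_strictAntiOn_of_strictMonoOn (hanti : StrictAntiOn f (Icc a m))
    (hmono : StrictMonoOn f (Ici m)) {x : ℝ} (hx : a ≤ x) (hxm : x ≠ m) : f m < f x := by
  rcases hxm.lt_or_gt with hlt | hgt
  · exact hanti ⟨hx, hlt.le⟩ ⟨hx.trans hlt.le, le_rfl⟩ hlt
  · exact hmono self_mem_Ici hgt.le hgt

lemma setOf_zero_eq_empty_of_strictAntiOn_of_strictMonoOn (hanti : StrictAntiOn f (Icc a m))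
    (hmono : StrictMonoOn f (Ici m)) (hm : 0 < f m) : {x | a < x ∧ f x = 0} = ∅ := by
  refine eq_empty_of_forall_notMem fun x ⟨hx, hx0⟩ => ?_
  by_cases hxm : x = m
  · subst hxm; linarith
  · linarith [apply_lt_apply_of_strictAntiOn_of_strictMonoOn hanti hmono hx.le hxm]

lemma setOf_zero_eq_singleton_of_strictAntiOn_of_strictMonoOn (hanti : StrictAntiOn f (Icc a m))
    (hmono : StrictMonoOn f (Ici m)) (ham : a ≤ m) (ha : 0 < f a) (hm : f m = 0) :
    {x | a < x ∧ f x = 0} = {m} := by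
  ext x
  refine ⟨fun ⟨hx, hx0⟩ => ?_, fun hx => ?_⟩
  · by_contra hxm
    linarith [apply_lt_apply_of_strictAntiOn_of_strictMonoOn hanti hmono hx.le hxm]
  · rw [mem_singleton_iff.1 hx]
    exact ⟨ham.lt_of_ne (by rintro rfl; linarith), hm⟩

lemma ncard_setOf_zero_eq_two_of_strictAntiOn_of_strictMonoOn (hf : ContinuousOn f (Ici a))
    (hanti : StrictAntiOn f (Icc a m)) (hmono : StrictMonoOn f (Ici m)) {b : ℝ} (ham : a ≤ m)
    (hmb : m ≤ b) (ha : 0 < f a) (hm : f m < 0) (hb : 0 < f b) :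
    {x | a < x ∧ f x = 0}.ncard = 2 := by
  obtain ⟨r₁, hr₁, hr₁0⟩ := intermediate_value_Icc' ham
    (hf.mono (Icc_subset_Ici_self)) ⟨hm.le, ha.le⟩
  obtain ⟨r₂, hr₂, hr₂0⟩ := intermediate_value_Icc hmb
    (hf.mono (Icc_subset_Ici_iff hmb |>.2 ham)) ⟨hm.le, hb.le⟩
  have har₁ : a < r₁ := hr₁.1.lt_of_ne (by rintro rfl; linarith)
  have hr₁m : r₁ < m := hr₁.2.lt_of_ne (by rintro rfl; linarith)
  have hmr₂ : m < r₂ := hr₂.1.lt_of_ne (by rintro rfl; linarith)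
  refine ncard_eq_two.2 ⟨r₁, r₂, (hr₁m.trans hmr₂).ne, ?_⟩
  ext x
  simp only [mem_insert_iff, mem_singleton_iff]
  refine ⟨fun ⟨hx, hx0⟩ => ?_, ?_⟩
  · rcases le_or_gt x m with hxm | hxm
    · exact .inl (hanti.injOn ⟨hx.le, hxm⟩ hr₁ (hx0.trans hr₁0.symm))
    · exact .inr (hmono.injOn hxm.le hr₂.1 (hx0.trans hr₂0.symm))
  · rintro (rfl | rfl)
    · exact ⟨har₁, hr₁0⟩
    · exact ⟨ham.trans_lt hmr₂, hr₂0⟩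

end Valley

namespace IsingCubic

noncomputable section

def cubic (α ξ : ℝ) : ℝ := ξ ^ 3 - α * ξ ^ 2 - 2 * ξ + α ^ 2 + α

def critMin (α : ℝ) : ℝ := (α + √(α ^ 2 + 6)) / 3

def critMax (α : ℝ) : ℝ := (α - √(α ^ 2 + 6)) / 3

def discr (α : ℝ) : ℝ := 4 * α ^ 5 - 23 * α ^ 4 - 18 * α ^ 3 + 13 * α ^ 2 + 32

end

variable (α : ℝ)

lemma sq_sqrt_sq_add_six : √(α ^ 2 + 6) ^ 2 = α ^ 2 + 6 := Real.sq_sqrt (by positivity)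

lemma lt_sqrt_sq_add_six : α < √(α ^ 2 + 6) := by
  nlinarith [sq_sqrt_sq_add_six α, Real.sqrt_nonneg (α ^ 2 + 6)]

lemma critMax_neg : critMax α < 0 := by
  have := lt_sqrt_sq_add_six α
  unfold critMax; linarith

lemma hasDerivAt_cubic (x : ℝ) :
    HasDerivAt (cubic α) (3 * (x - critMin α) * (x - critMax α)) x := by
  have h := ((((hasDerivAt_pow 3 x).sub ((hasDerivAt_pow 2 x).const_mul α)).sub
    ((hasDerivAt_id x).const_mul 2)).add_const (α ^ 2)).add_const α
  refine h.congr_deriv ?_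
  simp only [critMin, critMax, Nat.cast_ofNat, mul_one]
  linear_combination (1 / 3 : ℝ) * sq_sqrt_sq_add_six α

lemma continuous_cubic : Continuous (cubic α) :=
  continuous_iff_continuousAt.2 fun x => (hasDerivAt_cubic α x).continuousAt

lemma strictAntiOn_cubic : StrictAntiOn (cubic α) (Icc (critMax α) (critMin α)) := by
  refine strictAntiOn_of_hasDerivWithinAt_neg (convex_Icc _ _) (continuous_cubic α).continuousOn
    (fun x _ => (hasDerivAt_cubic α x).hasDerivWithinAt) fun x hx => ?_
  rw [interior_Icc] at hx
  nlinarith [mul_pos (sub_pos.2 hx.1) (sub_pos.2 hx.2)]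

lemma strictMonoOn_cubic : StrictMonoOn (cubic α) (Ici (critMin α)) := by
  refine strictMonoOn_of_hasDerivWithinAt_pos (convex_Ici _) (continuous_cubic α).continuousOn
    (fun x _ => (hasDerivAt_cubic α x).hasDerivWithinAt) fun x hx => ?_
  rw [interior_Ici] at hx
  have hcrit : critMax α < critMin α := by
    have : 0 < √(α ^ 2 + 6) := Real.sqrt_pos.2 (by positivity)
    unfold critMin critMax; linarith
  nlinarith [mul_pos (sub_pos.2 (hx : critMin α < x)) (sub_pos.2 (hcrit.trans hx))]

lemma two_le_critMin {α : ℝ} (hα : 5 / 2 ≤ α) : 2 ≤ critMin α := by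
  unfold critMin
  nlinarith [sq_sqrt_sq_add_six α, Real.sqrt_nonneg (α ^ 2 + 6)]

lemma critMin_le_two {α : ℝ} (hα : α ≤ 5 / 2) : critMin α ≤ 2 := by
  unfold critMin
  nlinarith [sq_sqrt_sq_add_six α, Real.sqrt_nonneg (α ^ 2 + 6)]

lemma critMin_le_add_two {α : ℝ} (hα : 0 ≤ α) : critMin α ≤ α + 2 := by
  unfold critMin
  nlinarith [sq_sqrt_sq_add_six α, Real.sqrt_nonneg (α ^ 2 + 6)]

lemma cubic_two_pos : 0 < cubic α 2 := by
  unfold cubic; nlinarith [sq_nonneg (2 * α - 3)]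

lemma cubic_add_two : cubic α (α + 2) = 3 * α ^ 2 + 7 * α + 4 := by
  unfold cubic; ring

lemma cubic_crit {t : ℝ} (ht : t ^ 2 = α ^ 2 + 6) :
    cubic α ((α + t) / 3) = (-2 * α ^ 3 + 27 * α ^ 2 + 9 * α - (2 * α ^ 2 + 12) * t) / 27 := by
  unfold cubic
  linear_combination (t / 27) * ht

lemma cubic_critMin_mul_cubic_critMax :
    cubic α (critMin α) * cubic α (critMax α) = -discr α / 27 := by
  have h := sq_sqrt_sq_add_six α
  rw [critMin, critMax, sub_eq_add_neg, cubic_crit α h, cubic_crit α (by rw [neg_sq, h])]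
  unfold discr
  linear_combination (-(2 * α ^ 2 + 12) ^ 2 / 729) * h

lemma cubic_critMax_pos (hα : 0 < α) : 0 < cubic α (critMax α) := by
  have h := lt_sqrt_sq_add_six α
  rw [critMax, sub_eq_add_neg, cubic_crit α (by rw [neg_sq, sq_sqrt_sq_add_six])]
  nlinarith [mul_lt_mul_of_pos_left h (show 0 < 2 * α ^ 2 + 12 by positivity)]

lemma strictAntiOn_cubic_Icc_two : StrictAntiOn (cubic α) (Icc 2 (critMin α)) :=
  (strictAntiOn_cubic α).mono (Icc_subset_Icc_left (by linarith [critMax_neg α]))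

variable {α}

lemma setOf_root_eq_empty_of_le (hα : α ≤ 5 / 2) : {ξ | 2 < ξ ∧ cubic α ξ = 0} = ∅ :=
  setOf_zero_eq_empty_of_strictAntiOn_of_strictMonoOn
    ((subsingleton_Icc_of_ge le_rfl).strictAntiOn _)
    ((strictMonoOn_cubic α).mono (Ici_subset_Ici.2 (critMin_le_two hα))) (cubic_two_pos α)

lemma setOf_root_eq_empty_of_discr_neg (hα : 0 < α) (hΔ : discr α < 0) :
    {ξ | 2 < ξ ∧ cubic α ξ = 0} = ∅ := by
  have hmin : 0 < cubic α (critMin α) :=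
    pos_of_mul_pos_left (by rw [cubic_critMin_mul_cubic_critMax]; linarith)
      (cubic_critMax_pos α hα).le
  exact setOf_zero_eq_empty_of_strictAntiOn_of_strictMonoOn (strictAntiOn_cubic_Icc_two α)
    (strictMonoOn_cubic α) hmin

lemma setOf_root_eq_singleton_of_discr_eq_zero (hα : 5 / 2 ≤ α) (hΔ : discr α = 0) :
    {ξ | 2 < ξ ∧ cubic α ξ = 0} = {critMin α} := by
  have hmin : cubic α (critMin α) = 0 := by
    have := cubic_critMin_mul_cubic_critMax α
    rw [hΔ, neg_zero, zero_div] at this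
    exact (mul_eq_zero.1 this).resolve_right (cubic_critMax_pos α (by linarith)).ne'
  exact setOf_zero_eq_singleton_of_strictAntiOn_of_strictMonoOn (strictAntiOn_cubic_Icc_two α)
    (strictMonoOn_cubic α) (two_le_critMin hα) (cubic_two_pos α) hmin

lemma ncard_setOf_root_eq_two_of_discr_pos (hα : 5 / 2 ≤ α) (hΔ : 0 < discr α) :
    {ξ | 2 < ξ ∧ cubic α ξ = 0}.ncard = 2 := by
  have hmin : cubic α (critMin α) < 0 :=
    neg_of_mul_neg_left (by rw [cubic_critMin_mul_cubic_critMax]; linarith)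
      (cubic_critMax_pos α (by linarith)).le
  exact ncard_setOf_zero_eq_two_of_strictAntiOn_of_strictMonoOn
    (continuous_cubic α).continuousOn (strictAntiOn_cubic_Icc_two α) (strictMonoOn_cubic α)
    (two_le_critMin hα) (critMin_le_add_two (by linarith)) (cubic_two_pos α) hmin
    (by rw [cubic_add_two]; nlinarith)

lemma discr_neg_of_le_six (h₁ : 5 / 2 < α) (h₂ : α ≤ 6) : discr α < 0 := by
  have ha : 0 ≤ α - 5 / 2 := by linarith
  have hb : 0 ≤ 6 - α := by linarith
  have hα : 0 ≤ α := by linarith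
  unfold discr
  nlinarith [mul_nonneg ha hb, mul_nonneg (mul_nonneg ha hb) hα,
    mul_nonneg (mul_nonneg (mul_nonneg ha hb) hα) hα, mul_nonneg (mul_nonneg ha ha) hb,
    sq_nonneg (α - 5), sq_nonneg (α - 4)]

lemma continuous_discr : Continuous discr := by
  unfold discr; fun_prop

lemma hasDerivAt_discr (x : ℝ) :
    HasDerivAt discr (20 * x ^ 4 - 92 * x ^ 3 - 54 * x ^ 2 + 26 * x) x := by
  have h := (((((hasDerivAt_pow 5 x).const_mul 4).sub ((hasDerivAt_pow 4 x).const_mul 23)).sub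
    ((hasDerivAt_pow 3 x).const_mul 18)).add ((hasDerivAt_pow 2 x).const_mul 13)).add_const 32
  refine h.congr_deriv ?_
  norm_num; ring

lemma strictMonoOn_discr : StrictMonoOn discr (Ici 6) := by
  refine strictMonoOn_of_hasDerivWithinAt_pos (convex_Ici _) continuous_discr.continuousOn
    (fun x _ => (hasDerivAt_discr x).hasDerivWithinAt) fun x hx => ?_
  rw [interior_Ici] at hx
  have hx6 : 6 < x := hx
  have hx0 : 0 < x := by linarith
  nlinarith [mul_pos (pow_pos hx0 3) (sub_pos.2 hx6), pow_pos hx0 3, mul_pos hx0 hx0]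

lemma exists_discr_sign_change : ∃ c, 5 / 2 < c ∧ discr c = 0 ∧
    (∀ α, 5 / 2 < α → α < c → discr α < 0) ∧ ∀ α, c < α → 0 < discr α := by
  obtain ⟨c, ⟨hc6, -⟩, hc0⟩ := intermediate_value_Icc (show (6 : ℝ) ≤ 7 by norm_num)
    continuous_discr.continuousOn (show (0 : ℝ) ∈ Icc (discr 6) (discr 7) by norm_num [discr])
  refine ⟨c, by linarith, hc0, fun α h₁ h₂ => ?_, fun α hα => ?_⟩
  · rcases le_or_gt α 6 with h6 | h6
    · exact discr_neg_of_le_six h₁ h6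
    · exact hc0 ▸ strictMonoOn_discr h6.le hc6 h₂
  · exact hc0 ▸ strictMonoOn_discr hc6 (hc6.trans hα.le) hα

end IsingCubic

open IsingCubic in
theorem stmt_8 :
    ∃! αcr : ℝ, αcr > 2.5 ∧
      (∀ α : ℝ, α > αcr →
        {ξ : ℝ | ξ > 2 ∧ ξ^3 - α*ξ^2 - 2*ξ + α^2 + α = 0}.ncard = 2) ∧
      ({ξ : ℝ | ξ > 2 ∧ ξ^3 - αcr*ξ^2 - 2*ξ + αcr^2 + αcr = 0}.ncard = 1) ∧
      (∀ α : ℝ, 1 < α → α < αcr →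
        {ξ : ℝ | ξ > 2 ∧ ξ^3 - α*ξ^2 - 2*ξ + α^2 + α = 0} = ∅) := by
  obtain ⟨c, hc, hc0, hneg, hpos⟩ := exists_discr_sign_change
  have roots_two (α : ℝ) (hα : c < α) : {ξ | 2 < ξ ∧ cubic α ξ = 0}.ncard = 2 :=
    ncard_setOf_root_eq_two_of_discr_pos (by linarith) (hpos α hα)
  have roots_empty (α : ℝ) (hα : α < c) : {ξ | 2 < ξ ∧ cubic α ξ = 0} = ∅ := by
    rcases le_or_gt α (5 / 2) with h | h
    · exact setOf_root_eq_empty_of_le h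
    · exact setOf_root_eq_empty_of_discr_neg (by linarith) (hneg α h hα)
  refine ⟨c, ⟨by norm_num; linarith, roots_two, ?_, fun α _ hα => roots_empty α hα⟩, ?_⟩
  · exact (setOf_root_eq_singleton_of_discr_eq_zero hc.le hc0).symm ▸ ncard_singleton _
  · rintro y ⟨-, -, hy, -⟩
    change {ξ | 2 < ξ ∧ cubic y ξ = 0}.ncard = 1 at hy
    by_contra hyc
    rcases lt_or_gt_of_ne hyc with h | h
    · rw [roots_empty y h, ncard_empty] at hy; exact zero_ne_one hy
    · rw [roots_two y h] at hy; exact absurd hy (by norm_num)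
end

section
/- Let f(x) = (x + α)/(αx + 1) with α > 1. Define φ(x) = (f(f(x)^{k-1} · f(f(x)^k)))^{k-1} · f((f(f(x)^{k-1} · f(f(x)^k)))^k). Then φ(1) = 1 and φ'(1) = (α-1)^2 (α + 1 - 2k)^2 / (α+1)^4. -/
/-!
Write `f(x) = (x + α)/(αx + 1)` and `G(y) = y^(k-1) · f(y^k)`, so that `φ = G ∘ f ∘ G ∘ f`.
Both `f` and `G` fix `1`, hence by the chain rule `φ'(1) = (G'(1) f'(1))²`, where
`f'(1) = (1 - α)/(1 + α)` and `G'(1) = (k - 1) + k f'(1)`; then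
`G'(1) f'(1) = (2k - 1 - α)(1 - α)/(1 + α)²`.
-/

lemma hasDerivAt_mobius_one {α : ℝ} (hα : α + 1 ≠ 0) :
    HasDerivAt (fun x : ℝ => (x + α) / (α * x + 1)) ((1 - α) / (1 + α)) 1 := by
  have hnum : HasDerivAt (fun x : ℝ => x + α) 1 1 := (hasDerivAt_id 1).add_const α
  have hden : HasDerivAt (fun x : ℝ => α * x + 1) α 1 := by
    simpa using ((hasDerivAt_id (1 : ℝ)).const_mul α).add_const 1
  have hα' : 1 + α ≠ 0 := by rwa [add_comm]
  refine (hnum.div hden (by rwa [mul_one])).congr_deriv ?_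
  field_simp
  ring

lemma hasDerivAt_pow_pred_mul_comp_pow {g : ℝ → ℝ} {t : ℝ} {k : ℕ} (hk : 1 ≤ k)
    (hg1 : g 1 = 1) (hg : HasDerivAt g t 1) :
    HasDerivAt (fun y => y ^ (k - 1) * g (y ^ k)) (k - 1 + k * t) 1 := by
  have hpow : HasDerivAt (fun y : ℝ => y ^ k) k 1 := by
    simpa using hasDerivAt_pow k (1 : ℝ)
  have hpred : HasDerivAt (fun y : ℝ => y ^ (k - 1)) (k - 1) 1 := by
    simpa [Nat.cast_sub hk] using hasDerivAt_pow (k - 1) (1 : ℝ)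
  have hcomp : HasDerivAt (fun y => g (y ^ k)) (t * k) 1 := by
    refine HasDerivAt.comp (h₂ := g) 1 ?_ hpow
    simpa using hg
  refine (hpred.mul hcomp).congr_deriv ?_
  simp only [one_pow, hg1, mul_one, one_mul, add_right_inj]
  ring

theorem stmt_12 (α : ℝ) (hα : α > 1) (k : ℕ) (hk : 1 ≤ k) :
    let f : ℝ → ℝ := fun x => (x + α)/(α*x + 1)
    let φ : ℝ → ℝ := fun x =>
      (f ((f x)^(k-1) * f ((f x)^k)))^(k-1) * f ((f ((f x)^(k-1) * f ((f x)^k)))^k)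
    φ 1 = 1 ∧ deriv φ 1 = (α-1)^2 * (α + 1 - 2*k)^2 / (α+1)^4 := by
  intro f φ
  have hα' : α + 1 ≠ 0 := by linarith
  set t : ℝ := (1 - α) / (1 + α) with ht
  set G : ℝ → ℝ := fun y => y ^ (k - 1) * f (y ^ k)
  have hf1 : f 1 = 1 := by
    simp only [f]
    rw [mul_one, add_comm 1, div_self hα']
  have hG1 : G 1 = 1 := by simp [G, hf1]
  have hf : HasDerivAt f t 1 := hasDerivAt_mobius_one hα'
  have hG : HasDerivAt G (k - 1 + k * t) 1 := hasDerivAt_pow_pred_mul_comp_pow hk hf1 hf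
  have hφ : HasDerivAt φ ((k - 1 + k * t) * (t * ((k - 1 + k * t) * t))) 1 :=
    hG.comp_of_eq 1 (hf.comp_of_eq 1 (hG.comp_of_eq 1 hf hf1.symm)
      (show 1 = G (f 1) by rw [hf1, hG1])) (show 1 = f (G (f 1)) by rw [hf1, hG1, hf1])
  refine ⟨by simp [φ, hf1], ?_⟩
  rw [hφ.deriv, ht]
  field_simp
  ring
end

section
/- For k ≥ 6, the inequality (α-1)^2 (α+1-2k)^2 / (α+1)^4 > 1 in the variable α > 1 holds exactly for α ∈ (α₁, α₂), where α₁ = (k-1-√(k²-6k+1))/2 and α₂ = (k-1+√(k²-6k+1))/2. -/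
theorem stmt_13 (k : ℕ) (hk : 6 ≤ k) (α : ℝ) (hα : α > 1) :
    (α-1)^2 * (α + 1 - 2*(k:ℝ))^2 / (α+1)^4 > 1 ↔
      α ∈ Set.Ioo (((k:ℝ) - 1 - Real.sqrt ((k:ℝ)^2 - 6*k + 1))/2)
                  (((k:ℝ) - 1 + Real.sqrt ((k:ℝ)^2 - 6*k + 1))/2) := by
  have hK : (6:ℝ) ≤ (k:ℝ) := by exact_mod_cast hk
  set K := (k:ℝ) with hKdef
  have hd : 0 ≤ K^2 - 6*K + 1 := by nlinarith
  set s := Real.sqrt (K^2 - 6*K + 1) with hsdef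
  have hs : s^2 = K^2 - 6*K + 1 := Real.sq_sqrt hd
  have hs0 : 0 ≤ s := Real.sqrt_nonneg _
  have hα1 : (0:ℝ) < α + 1 := by linarith
  have hpow : (0:ℝ) < (α+1)^4 := by positivity
  have hpos : 0 < (K+1)*α - (K-1) := by nlinarith
  rw [Set.mem_Ioo]
  constructor
  · intro h
    rw [gt_iff_lt, lt_div_iff₀ hpow] at h
    have key : α^2 - (K-1)*α + K < 0 := by
      by_contra hcon
      push_neg at hcon
      nlinarith [mul_nonneg hpos.le hcon]
    have hqs : (2*α-(K-1))^2 < s^2 := by rw [hs]; nlinarith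
    have habs : |2*α-(K-1)| < s := abs_lt_of_sq_lt_sq hqs hs0
    rw [abs_lt] at habs
    constructor
    · linarith [habs.1]
    · linarith [habs.2]
  · rintro ⟨h1, h2⟩
    rw [gt_iff_lt, lt_div_iff₀ hpow]
    have hqs : (2*α-(K-1))^2 < s^2 := by
      apply sq_lt_sq' <;> linarith
    have key : α^2 - (K-1)*α + K < 0 := by nlinarith
    nlinarith [mul_pos hpos (neg_pos.mpr key)]
end

section
/- Let φ: ℝ → ℝ be a continuous bounded function with φ(1) = 1 and differentiable at 1 with φ'(1) > 1. Then the equation φ(x) = x has at least three solutions. -/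
theorem stmt_16 (φ : ℝ → ℝ) (hc : Continuous φ) (hb : ∃ M : ℝ, ∀ x, |φ x| ≤ M)
    (h1 : φ 1 = 1) (hd : DifferentiableAt ℝ φ 1) (hd1 : deriv φ 1 > 1) :
    ∃ a b c : ℝ, a ≠ b ∧ b ≠ c ∧ a ≠ c ∧ φ a = a ∧ φ b = b ∧ φ c = c := by
  obtain ⟨M, hM⟩ := hb
  set ψ : ℝ → ℝ := fun x => φ x - x with hψdef
  have hψc : Continuous ψ := hc.sub continuous_id
  have hψ1 : ψ 1 = 0 := by simp [ψ, h1]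
  -- ψ has derivative deriv φ 1 - 1 > 0 at 1
  have hder : HasDerivAt ψ (deriv φ 1 - 1) 1 := hd.hasDerivAt.sub (hasDerivAt_id 1)
  have hslope : Filter.Tendsto (slope ψ 1) (nhdsWithin 1 {(1:ℝ)}ᶜ) (nhds (deriv φ 1 - 1)) :=
    hasDerivAt_iff_tendsto_slope.mp hder
  have hpos : ∀ᶠ z in nhdsWithin 1 {(1:ℝ)}ᶜ, 0 < slope ψ 1 z :=
    hslope.eventually (eventually_gt_nhds (by linarith))
  -- get a point x < 1 with ψ x < 0
  have hlt : ∀ᶠ z in nhdsWithin (1:ℝ) (Set.Iio 1), 0 < slope ψ 1 z :=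
    nhdsWithin_mono 1 (fun z hz => ne_of_lt hz) hpos
  obtain ⟨x, hx0, hx1⟩ := (hlt.and self_mem_nhdsWithin).exists
  have hxlt : x < 1 := hx1
  have hψx : ψ x < 0 := by
    have hden : x - 1 < 0 := by linarith
    have h' : 0 < (ψ x - ψ 1) / (x - 1) := by
      have := hx0; rw [slope] at this
      simpa [vsub_eq_sub, div_eq_inv_mul] using this
    rw [hψ1, sub_zero] at h'
    rcases lt_trichotomy (ψ x) 0 with h | h | h
    · exact h
    · simp [h] at h'
    · exact absurd h' (not_lt.mpr (le_of_lt (div_neg_of_pos_of_neg h hden)))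
  -- get a point y > 1 with ψ y > 0
  have hgt : ∀ᶠ z in nhdsWithin (1:ℝ) (Set.Ioi 1), 0 < slope ψ 1 z :=
    nhdsWithin_mono 1 (fun z hz => ne_of_gt hz) hpos
  obtain ⟨y, hy0, hy1⟩ := (hgt.and self_mem_nhdsWithin).exists
  have hylt : 1 < y := hy1
  have hψy : 0 < ψ y := by
    have h' : 0 < (ψ y - ψ 1) / (y - 1) := by
      have := hy0; rw [slope] at this
      simpa [vsub_eq_sub, div_eq_inv_mul] using this
    rw [hψ1, sub_zero] at h'
    have hden : 0 < y - 1 := by linarith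
    rcases lt_trichotomy 0 (ψ y) with h | h | h
    · exact h
    · simp [← h] at h'
    · exact absurd h' (not_lt.mpr (le_of_lt (div_neg_of_neg_of_pos h hden)))
  have hM0 : (0:ℝ) ≤ M := le_trans (abs_nonneg _) (hM 1)
  -- far left point p with ψ p > 0
  set p : ℝ := min (-M - 1) (x - 1) with hp
  have hpx : p ≤ x := le_trans (min_le_right _ _) (by linarith)
  have hψp : 0 < ψ p := by
    have h1p : φ p ≥ -M := neg_le_of_abs_le (hM p)
    have h2p : p ≤ -M - 1 := min_le_left _ _
    simp only [ψ]; linarith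
  -- far right point q with ψ q < 0
  set q : ℝ := max (M + 1) (y + 1) with hq
  have hyq : y ≤ q := le_trans (by linarith) (le_max_right _ _)
  have hψq : ψ q < 0 := by
    have h1q : φ q ≤ M := le_of_abs_le (hM q)
    have h2q : M + 1 ≤ q := le_max_left _ _
    simp only [ψ]; linarith
  -- IVT for a root a in [p, x]
  have hivta := intermediate_value_Icc' hpx (hψc.continuousOn)
  have ha : (0:ℝ) ∈ ψ '' Set.Icc p x := hivta ⟨le_of_lt hψx, le_of_lt hψp⟩
  obtain ⟨a, haI, haψ⟩ := ha
  have halt : a < 1 := lt_of_le_of_lt haI.2 hxlt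
  -- IVT for a root c in [y, q]
  have hivtc := intermediate_value_Icc' hyq (hψc.continuousOn)
  have hcm : (0:ℝ) ∈ ψ '' Set.Icc y q := hivtc ⟨le_of_lt hψq, le_of_lt hψy⟩
  obtain ⟨c, hcI, hcψ⟩ := hcm
  have hcgt : 1 < c := lt_of_lt_of_le hylt hcI.1
  refine ⟨a, 1, c, ne_of_lt halt, ne_of_lt hcgt, ne_of_lt (lt_trans halt hcgt), ?_, h1, ?_⟩
  · have : φ a - a = 0 := haψ
    linarith
  · have : φ c - c = 0 := hcψ
    linarith
end

section
/- For k = 4 and α > α_cr (where α_cr ≈ 6.3716 is the unique root > 5 of 9α + 27α² - 2α³ = 2(α²+6)^{3/2}), the equation (u²-1)(u⁶ - αu⁵ + u⁴ + (α²-α)u³ + u² - αu + 1) = 0 has exactly five positive real solutions. -/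
set_option maxHeartbeats 1000000 in
theorem stmt_19 (αcr : ℝ) (hcr5 : αcr > 5)
    (hcr : 9*αcr + 27*αcr^2 - 2*αcr^3 = 2*(αcr^2+6)^((3:ℝ)/2))
    (α : ℝ) (hα : α > αcr) :
    {u : ℝ | u > 0 ∧
      (u^2 - 1)*(u^6 - α*u^5 + u^4 + (α^2 - α)*u^3 + u^2 - α*u + 1) = 0}.ncard = 5 := by
  have hα5 : α > 5 := hcr5.trans hα
  have h6a : (0:ℝ) ≤ α^2+6 := by positivity
  have h6b : (0:ℝ) ≤ αcr^2+6 := by positivity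
  set na := Real.sqrt (α^2+6) with hna
  set nb := Real.sqrt (αcr^2+6) with hnb
  have ha2 : na^2 = α^2+6 := Real.sq_sqrt h6a
  have hb2 : nb^2 = αcr^2+6 := Real.sq_sqrt h6b
  have han : na ≥ 0 := Real.sqrt_nonneg _
  have hbn : nb ≥ 0 := Real.sqrt_nonneg _
  have hcr' : 9*αcr + 27*αcr^2 - 2*αcr^3 = 2*nb^3 := by
    rw [hcr, show ((3:ℝ)/2) = (1/2) * (3:ℕ) by norm_num, Real.rpow_mul h6b,
      Real.rpow_natCast, ← Real.sqrt_eq_rpow]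
  -- key inequality
  have hkey : 9*α + 27*α^2 - 2*α^3 < 2*na^3 := by
    have haα : na > α := by nlinarith
    have hbβ : nb > αcr := by nlinarith
    have hab : na > nb := by nlinarith
    have hdiff : (na - nb)*(na + nb) = (α - αcr)*(α + αcr) := by linear_combination ha2 - hb2
    have key1 : na^3 - nb^3 = (3/4)*(na-nb)*(na+nb)^2 + (1/4)*(na-nb)^3 := by ring
    have h1 : na^3 - nb^3 ≥ (3/4)*(α-αcr)*(α+αcr)*(na+nb) := by
      nlinarith [pow_pos (sub_pos.2 hab) 3, sq_nonneg (na-nb)]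
    have h2 : (3/4)*(α-αcr)*(α+αcr)*(na+nb) ≥ (3/4)*(α-αcr)*(α+αcr)*(α+αcr) := by
      nlinarith [mul_pos (sub_pos.2 hα) (by nlinarith : (0:ℝ) < α+αcr)]
    nlinarith [mul_pos (sub_pos.2 hα) (by nlinarith : (0:ℝ) < α+αcr), sq_nonneg (α-αcr),
      mul_pos (sub_pos.2 hα) (by nlinarith : (0:ℝ) < 3*(α+αcr)^2 - 27*(α+αcr) - 9)]
  have haα : na > α := by nlinarith
  -- cubic P and its two roots > 2
  set P : ℝ → ℝ := fun ξ => ξ^3 - α*ξ^2 - 2*ξ + α^2 + α with hP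
  set ξp : ℝ := (α + na)/3 with hξp
  have hPξp : P ξp < 0 := by
    have h27 : 27 * P ξp = 9*α + 27*α^2 - 2*α^3 - 2*na^3 := by
      simp only [hP, hξp]
      linear_combination (3*na) * ha2
    nlinarith
  have h2ξp : 2 < ξp := by simp only [hξp]; nlinarith
  have hξpM : ξp < α + 3 := by simp only [hξp]; nlinarith
  have hP2 : P 2 > 0 := by simp only [hP]; nlinarith
  have hPM : P (α+3) > 0 := by simp only [hP]; nlinarith
  have hc : ContinuousOn P (Set.Icc 2 ξp) := by fun_prop
  have hc2 : ContinuousOn P (Set.Icc ξp (α+3)) := by fun_prop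
  obtain ⟨ξ1, hξ1mem, hPξ1⟩ := intermediate_value_Ioo' h2ξp.le hc (Set.mem_Ioo.2 ⟨hPξp, hP2⟩)
  obtain ⟨ξ2, hξ2mem, hPξ2⟩ := intermediate_value_Ioo hξpM.le hc2 (Set.mem_Ioo.2 ⟨hPξp, hPM⟩)
  simp only [hP] at hPξ1 hPξ2
  obtain ⟨hξ1l, hξ1u⟩ := hξ1mem
  obtain ⟨hξ2l, hξ2u⟩ := hξ2mem
  have hξ1gt2 : 2 < ξ1 := hξ1l
  have hξ2gt2 : 2 < ξ2 := lt_trans h2ξp hξ2l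
  have hξ12 : ξ1 ≠ ξ2 := ne_of_lt (lt_trans hξ1u hξ2l)
  -- any root of P greater than 2 is ξ1 or ξ2
  have hloc : ∀ ξ3 : ℝ, 2 < ξ3 → ξ3^3 - α*ξ3^2 - 2*ξ3 + α^2 + α = 0 → ξ3 = ξ1 ∨ ξ3 = ξ2 := by
    intro ξ3 hg3 h3
    by_contra hcon
    push_neg at hcon
    obtain ⟨h13, h23⟩ := hcon
    have e13 : ξ1^2 + ξ1*ξ3 + ξ3^2 - α*(ξ1+ξ3) - 2 = 0 := by
      have h : (ξ1 - ξ3) * (ξ1^2 + ξ1*ξ3 + ξ3^2 - α*(ξ1+ξ3) - 2) = 0 := by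
        linear_combination hPξ1 - h3
      rcases mul_eq_zero.1 h with h | h
      · exact absurd (sub_eq_zero.1 h).symm h13
      · exact h
    have e23 : ξ2^2 + ξ2*ξ3 + ξ3^2 - α*(ξ2+ξ3) - 2 = 0 := by
      have h : (ξ2 - ξ3) * (ξ2^2 + ξ2*ξ3 + ξ3^2 - α*(ξ2+ξ3) - 2) = 0 := by
        linear_combination hPξ2 - h3
      rcases mul_eq_zero.1 h with h | h
      · exact absurd (sub_eq_zero.1 h).symm h23
      · exact h
    have s1 : ξ1 + ξ2 + ξ3 = α := by
      have h : (ξ1 - ξ2) * (ξ1 + ξ2 + ξ3 - α) = 0 := by linear_combination e13 - e23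
      rcases mul_eq_zero.1 h with h | h
      · exact absurd (sub_eq_zero.1 h) hξ12
      · linarith [sub_eq_zero.1 h]
    have s2 : ξ1*ξ2 + ξ1*ξ3 + ξ2*ξ3 = -2 := by
      linear_combination -e13 + (ξ1 + ξ3) * s1
    have s3 : ξ1*ξ2*ξ3 = -(α^2 + α) := by
      linear_combination h3 - ξ3^2 * s1 + ξ3 * s2
    linarith [mul_pos (mul_pos (by linarith : (0:ℝ) < ξ1) (by linarith : (0:ℝ) < ξ2))
      (by linarith : (0:ℝ) < ξ3), sq_nonneg α, s3]
  -- key identity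
  have hident : ∀ u : ℝ, u ≠ 0 →
      u^6 - α*u^5 + u^4 + (α^2 - α)*u^3 + u^2 - α*u + 1
        = u^3 * ((u+1/u)^3 - α*(u+1/u)^2 - 2*(u+1/u) + α^2 + α) := by
    intro u hu
    field_simp
    ring
  -- membership helper
  have hmem : ∀ ξ u : ℝ, 0 < u → u + 1/u = ξ → ξ^3 - α*ξ^2 - 2*ξ + α^2 + α = 0 →
      u ∈ {u : ℝ | u > 0 ∧
        (u^2 - 1)*(u^6 - α*u^5 + u^4 + (α^2 - α)*u^3 + u^2 - α*u + 1) = 0} := by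
    intro ξ u hu hsum hroot
    refine ⟨hu, ?_⟩
    have hs : u^6 - α*u^5 + u^4 + (α^2 - α)*u^3 + u^2 - α*u + 1 = 0 := by
      rw [hident u hu.ne', hsum, hroot, mul_zero]
    rw [hs, mul_zero]
  -- the quadratic roots
  set t1 := Real.sqrt (ξ1^2 - 4) with ht1def
  set t2 := Real.sqrt (ξ2^2 - 4) with ht2def
  have hd1 : (0:ℝ) < ξ1^2 - 4 := by
    have e : ξ1^2 - 4 = (ξ1-2)*(ξ1+2) := by ring
    rw [e]; exact mul_pos (by linarith) (by linarith)
  have hd2 : (0:ℝ) < ξ2^2 - 4 := by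
    have e : ξ2^2 - 4 = (ξ2-2)*(ξ2+2) := by ring
    rw [e]; exact mul_pos (by linarith) (by linarith)
  have ht1sq : t1^2 = ξ1^2 - 4 := Real.sq_sqrt hd1.le
  have ht2sq : t2^2 = ξ2^2 - 4 := Real.sq_sqrt hd2.le
  have ht1pos : 0 < t1 := Real.sqrt_pos.2 hd1
  have ht2pos : 0 < t2 := Real.sqrt_pos.2 hd2
  have ht1lt : t1 < ξ1 := by
    have h := Real.sqrt_lt_sqrt hd1.le (by linarith : ξ1^2 - 4 < ξ1^2)
    rwa [Real.sqrt_sq (by linarith : (0:ℝ) ≤ ξ1)] at h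
  have ht2lt : t2 < ξ2 := by
    have h := Real.sqrt_lt_sqrt hd2.le (by linarith : ξ2^2 - 4 < ξ2^2)
    rwa [Real.sqrt_sq (by linarith : (0:ℝ) ≤ ξ2)] at h
  set q1 : ℝ := (ξ1 - t1)/2 with hq1def
  set p1 : ℝ := (ξ1 + t1)/2 with hp1def
  set q2 : ℝ := (ξ2 - t2)/2 with hq2def
  set p2 : ℝ := (ξ2 + t2)/2 with hp2def
  have hq1pos : 0 < q1 := by rw [hq1def]; linarith
  have hp1pos : 0 < p1 := by rw [hp1def]; linarith
  have hq2pos : 0 < q2 := by rw [hq2def]; linarith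
  have hp2pos : 0 < p2 := by rw [hp2def]; linarith
  have hq1sum : q1 + 1/q1 = ξ1 := by
    rw [hq1def]
    have h1 : ξ1 - t1 ≠ 0 := by linarith
    field_simp
    linear_combination ht1sq
  have hp1sum : p1 + 1/p1 = ξ1 := by
    rw [hp1def]
    have h1 : ξ1 + t1 ≠ 0 := by positivity
    field_simp
    linear_combination ht1sq
  have hq2sum : q2 + 1/q2 = ξ2 := by
    rw [hq2def]
    have h1 : ξ2 - t2 ≠ 0 := by linarith
    field_simp
    linear_combination ht2sq
  have hp2sum : p2 + 1/p2 = ξ2 := by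
    rw [hp2def]
    have h1 : ξ2 + t2 ≠ 0 := by positivity
    field_simp
    linear_combination ht2sq
  -- distinctness via the map u ↦ u + 1/u
  have hnetool : ∀ x y ξ ξ' : ℝ, x + 1/x = ξ → y + 1/y = ξ' → ξ ≠ ξ' → x ≠ y := by
    intro x y ξ ξ' hx hy hne heq
    exact hne (by rw [← hx, heq, hy])
  have h1sum : (1:ℝ) + 1/1 = 2 := by norm_num
  have ne1q1 : (1:ℝ) ≠ q1 := hnetool 1 q1 2 ξ1 h1sum hq1sum (ne_of_lt hξ1gt2)
  have ne1p1 : (1:ℝ) ≠ p1 := hnetool 1 p1 2 ξ1 h1sum hp1sum (ne_of_lt hξ1gt2)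
  have ne1q2 : (1:ℝ) ≠ q2 := hnetool 1 q2 2 ξ2 h1sum hq2sum (ne_of_lt hξ2gt2)
  have ne1p2 : (1:ℝ) ≠ p2 := hnetool 1 p2 2 ξ2 h1sum hp2sum (ne_of_lt hξ2gt2)
  have neq1p1 : q1 ≠ p1 := ne_of_lt (by rw [hq1def, hp1def]; linarith)
  have neq2p2 : q2 ≠ p2 := ne_of_lt (by rw [hq2def, hp2def]; linarith)
  have neq1q2 : q1 ≠ q2 := hnetool q1 q2 ξ1 ξ2 hq1sum hq2sum hξ12
  have neq1p2 : q1 ≠ p2 := hnetool q1 p2 ξ1 ξ2 hq1sum hp2sum hξ12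
  have nep1q2 : p1 ≠ q2 := hnetool p1 q2 ξ1 ξ2 hp1sum hq2sum hξ12
  have nep1p2 : p1 ≠ p2 := hnetool p1 p2 ξ1 ξ2 hp1sum hp2sum hξ12
  -- set equality
  have hSeq : {u : ℝ | u > 0 ∧
      (u^2 - 1)*(u^6 - α*u^5 + u^4 + (α^2 - α)*u^3 + u^2 - α*u + 1) = 0}
      = {1, q1, p1, q2, p2} := by
    ext u
    simp only [Set.mem_setOf_eq, Set.mem_insert_iff, Set.mem_singleton_iff]
    constructor
    · rintro ⟨hu, heq⟩
      rcases mul_eq_zero.1 heq with h | h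
      · left
        have hf : (u - 1) * (u + 1) = 0 := by linear_combination h
        rcases mul_eq_zero.1 hf with h' | h'
        · exact sub_eq_zero.1 h'
        · exfalso; linarith
      · have hu0 : u ≠ 0 := ne_of_gt hu
        rw [hident u hu0] at h
        rcases mul_eq_zero.1 h with h3 | hPz
        · exact absurd h3 (pow_ne_zero 3 hu0)
        · have hsum2 : 2 ≤ u + 1/u := by
            have h0 : u + 1/u - 2 = (u-1)^2/u := by field_simp; ring
            have h1 : (0:ℝ) ≤ (u-1)^2/u := by positivity
            linarith
          have hgt : 2 < u + 1/u := by
            rcases hsum2.lt_or_eq with h' | h'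
            · exact h'
            · exfalso
              rw [← h'] at hPz
              have h5 : 5*α < α*α := mul_lt_mul_of_pos_right hα5 (by linarith)
              linarith
          have hquv : ∀ ξ tt qq pp : ℝ, u + 1/u = ξ → tt^2 = ξ^2 - 4 →
              qq = (ξ - tt)/2 → pp = (ξ + tt)/2 → u = qq ∨ u = pp := by
            intro ξ tt qq pp hsξ htt hqq hpp
            have hqu : u^2 - ξ*u + 1 = 0 := by
              have h0 : u * (u + 1/u) = u^2 + 1 := by field_simp
              rw [hsξ] at h0
              linear_combination -h0
            have hfac : (u - qq) * (u - pp) = 0 := by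
              rw [hqq, hpp]
              linear_combination hqu - (1/4)*htt
            rcases mul_eq_zero.1 hfac with h'' | h''
            · exact Or.inl (sub_eq_zero.1 h'')
            · exact Or.inr (sub_eq_zero.1 h'')
          rcases hloc _ hgt hPz with h' | h'
          · rcases hquv ξ1 t1 q1 p1 h' ht1sq hq1def hp1def with h'' | h''
            · exact Or.inr (Or.inl h'')
            · exact Or.inr (Or.inr (Or.inl h''))
          · rcases hquv ξ2 t2 q2 p2 h' ht2sq hq2def hp2def with h'' | h''
            · exact Or.inr (Or.inr (Or.inr (Or.inl h'')))
            · exact Or.inr (Or.inr (Or.inr (Or.inr h'')))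
    · rintro (rfl | rfl | rfl | rfl | rfl)
      · exact ⟨one_pos, by norm_num⟩
      · exact hmem ξ1 q1 hq1pos hq1sum hPξ1
      · exact hmem ξ1 p1 hp1pos hp1sum hPξ1
      · exact hmem ξ2 q2 hq2pos hq2sum hPξ2
      · exact hmem ξ2 p2 hp2pos hp2sum hPξ2
  rw [hSeq]
  rw [Set.ncard_insert_of_notMem (by simp [ne1q1, ne1p1, ne1q2, ne1p2]),
    Set.ncard_insert_of_notMem (by simp [neq1p1, neq1q2, neq1p2]),
    Set.ncard_insert_of_notMem (by simp [nep1q2, nep1p2]),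
    Set.ncard_insert_of_notMem (by simp [neq2p2]),
    Set.ncard_singleton]
end
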